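/- Let S = k[x₁, …, xₙ] be a polynomial ring over a field k with homogeneous maximal ideal 𝔪. Let L be a finite full set of non-unit squarefree monomials in S. To each g ∈ L associate a monomial ideal I_g of S such that: (1) every minimal monomial generator of I_g lies in k[supp g] (i.e., involves only variables dividing g); and (2) for any g ∈ L and any variable z with zg ∈ L, one has I_g ⊆ 𝔪 I_{zg}. Let f be an element of L of minimal degree and set H = L ∖ {f}. Then (∑_{g ∈ H} g·I_g) ∩ f·I_f = 𝔫·f·I_f, where 𝔫 is the ideal generated by the variables z such that zf ∈ H. -/

import Mathlib

open MvPolynomial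

noncomputable section

variable {k : Type*} [Field k]

/-- A monomial ideal: an ideal generated by monomials. -/
def IsMonomialIdeal {σ : Type*} (I : Ideal (MvPolynomial σ k)) : Prop :=
  ∃ A : Set (σ →₀ ℕ), I = Ideal.span ((fun a => MvPolynomial.monomial a (1 : k)) '' A)

/-- The exponent vectors of the minimal monomial generators of a monomial ideal:
the exponents of monomials of `I` that are minimal with respect to the componentwise
order (equivalently, divisibility). -/
def minimalExponents {σ : Type*} (I : Ideal (MvPolynomial σ k)) : Set (σ →₀ ℕ) :=
  {a : σ →₀ ℕ | MvPolynomial.monomial a (1 : k) ∈ I ∧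
    ∀ b : σ →₀ ℕ, MvPolynomial.monomial b (1 : k) ∈ I → b ≤ a → b = a}

/-- `Supp(I)`: the set of variables appearing in some minimal monomial generator of `I`. -/
def idealSupport {σ : Type*} (I : Ideal (MvPolynomial σ k)) : Set σ :=
  {i : σ | ∃ a ∈ minimalExponents I, a i ≠ 0}

/-- The squarefree monomial with support `g`. -/
def sqfMonomial {n : ℕ} (k : Type*) [Field k] (g : Finset (Fin n)) :
    MvPolynomial (Fin n) k :=
  ∏ i ∈ g, X i

/-! Every `g ≠ f` in `L` is divisible by a variable `z ∉ f` with `z·f ∈ L`: take the first step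
of a full path from `f` to `lcm(f, g)`, which is a proper multiple of `f` by minimality of `f`.
Hence the sum lies in `𝔫`, while `𝔫·f·I_f` lies in the sum because `z·f·I_f ⊆ (zf)·I_{zf}`.
Conversely `f·I_f` is generated by monomials involving no generator of `𝔫`, so a monomial in
`f·I_f ∩ 𝔫` is divisible by `z·m` for a variable `z` of `𝔫` and a generator `m` of `f·I_f`. -/

section MonomialIdeal

variable {σ : Type*} {I J : Ideal (MvPolynomial σ k)}

theorem monomial_mem_ideal_span_monomial_image {A : Set (σ →₀ ℕ)} {d : σ →₀ ℕ} :
    monomial d (1 : k) ∈ Ideal.span ((fun a => monomial a (1 : k)) '' A) ↔ ∃ a ∈ A, a ≤ d := by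
  classical
  simp [mem_ideal_span_monomial_image, support_monomial]

theorem span_singleton_monomial_mul_span (e : σ →₀ ℕ) (A : Set (σ →₀ ℕ)) :
    Ideal.span {monomial e (1 : k)} * Ideal.span ((fun a => monomial a (1 : k)) '' A) =
      Ideal.span ((fun a => monomial a (1 : k)) '' ((e + ·) '' A)) := by
  rw [Ideal.span_mul_span', Set.singleton_mul, Set.image_image, Set.image_image]
  simp only [monomial_mul, one_mul]

theorem mem_minimalExponents_iff {a : σ →₀ ℕ} :
    a ∈ minimalExponents I ↔ Minimal (fun b => monomial b (1 : k) ∈ I) a := by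
  simp only [minimalExponents, minimal_iff, Set.mem_ofPred_eq, eq_comm]

theorem exists_mem_minimalExponents_le {d : σ →₀ ℕ} (hd : monomial d (1 : k) ∈ I) :
    ∃ a ∈ minimalExponents I, a ≤ d := by
  obtain ⟨a, had, ha⟩ := exists_minimal_le_of_wellFoundedLT (fun b => monomial b (1 : k) ∈ I) d hd
  exact ⟨a, mem_minimalExponents_iff.2 ha, had⟩

theorem isMonomialIdeal_iff_forall_monomial_mem :
    IsMonomialIdeal I ↔ ∀ p ∈ I, ∀ d ∈ p.support, monomial d (1 : k) ∈ I := by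
  constructor
  · rintro ⟨A, rfl⟩ p hp d hd
    exact monomial_mem_ideal_span_monomial_image.2 (mem_ideal_span_monomial_image.1 hp d hd)
  · intro h
    refine ⟨{d | monomial d (1 : k) ∈ I}, le_antisymm (fun p hp => ?_) ?_⟩
    · exact mem_ideal_span_monomial_image.2 fun d hd => ⟨d, h p hp d hd, le_rfl⟩
    · rw [Ideal.span_le]
      rintro _ ⟨d, hd, rfl⟩
      exact hd

namespace IsMonomialIdeal

theorem inf (hI : IsMonomialIdeal I) (hJ : IsMonomialIdeal J) : IsMonomialIdeal (I ⊓ J) := by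
  rw [isMonomialIdeal_iff_forall_monomial_mem] at *
  exact fun p hp d hd => ⟨hI p hp.1 d hd, hJ p hp.2 d hd⟩

theorem span_X_image (Z : Set σ) :
    IsMonomialIdeal (Ideal.span (X '' Z : Set (MvPolynomial σ k))) :=
  ⟨(fun z => Finsupp.single z 1) '' Z, by rw [Set.image_image]; rfl⟩

theorem le_of_forall_monomial_mem (hI : IsMonomialIdeal I)
    (h : ∀ d, monomial d (1 : k) ∈ I → monomial d 1 ∈ J) : I ≤ J := by
  obtain ⟨A, rfl⟩ := hI
  rw [Ideal.span_le]
  rintro _ ⟨a, ha, rfl⟩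
  exact h a (Ideal.subset_span ⟨a, ha, rfl⟩)

theorem eq_span_minimalExponents (hI : IsMonomialIdeal I) :
    I = Ideal.span ((fun a => monomial a (1 : k)) '' minimalExponents I) := by
  refine le_antisymm (hI.le_of_forall_monomial_mem fun d hd => ?_) ?_
  · exact monomial_mem_ideal_span_monomial_image.2 (exists_mem_minimalExponents_le hd)
  · rw [Ideal.span_le]
    rintro _ ⟨a, ha, rfl⟩
    exact ha.1

theorem inf_span_X_image_le {A : Set (σ →₀ ℕ)}
    (hJ : J = Ideal.span ((fun a => monomial a (1 : k)) '' A)) {Z : Set σ}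
    (hA : ∀ a ∈ A, ∀ z ∈ Z, a z = 0) :
    J ⊓ Ideal.span (X '' Z) ≤ Ideal.span (X '' Z) * J := by
  refine (inf ⟨A, hJ⟩ (span_X_image Z)).le_of_forall_monomial_mem ?_
  intro d hd
  obtain ⟨hdJ, hdZ⟩ := Submodule.mem_inf.1 hd
  rw [hJ, monomial_mem_ideal_span_monomial_image] at hdJ
  obtain ⟨a, ha, had⟩ := hdJ
  obtain ⟨z, hz, hdz⟩ := mem_ideal_span_X_image.1 hdZ d (by classical simp [support_monomial])
  have hle : Finsupp.single z 1 + a ≤ d := by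
    intro i
    by_cases hi : i = z
    · subst hi; simpa [hA a ha i hz, Nat.one_le_iff_ne_zero] using hdz
    · simpa [Finsupp.single_eq_of_ne hi] using had i
  obtain ⟨c, rfl⟩ := exists_add_of_le hle
  have hfactor :
      monomial (Finsupp.single z 1 + a + c) (1 : k) = X z * monomial a 1 * monomial c 1 := by
    simp only [X, monomial_mul, mul_one]
  rw [hfactor]
  exact Ideal.mul_mem_right _ _ (Ideal.mul_mem_mul (Ideal.subset_span ⟨z, hz, rfl⟩)
    (hJ ▸ Ideal.subset_span ⟨a, ha, rfl⟩))

end IsMonomialIdeal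

end MonomialIdeal

theorem Ideal.span_mul_le_iff {R : Type*} [CommSemiring R] {S : Set R} {J K : Ideal R} :
    Ideal.span S * J ≤ K ↔ ∀ s ∈ S, Ideal.span {s} * J ≤ K := by
  rw [Ideal.span, Submodule.span_eq_iSup_of_singleton_spans, Submodule.iSup_mul]
  simp only [Submodule.iSup_mul, iSup_le_iff]

section FullPath

variable {α : Type*} [DecidableEq α] {L : Finset (Finset α)}

theorem path_subset_of_le {c : ℕ → Finset α} {l : ℕ}
    (hstep : ∀ j < l, ∃ z : α, z ∉ c j ∧ c (j + 1) = insert z (c j)) {i j : ℕ} (hij : i ≤ j)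
    (hjl : j ≤ l) : c i ⊆ c j := by
  induction j, hij using Nat.le_induction with
  | base => exact subset_rfl
  | succ j _ ih =>
    obtain ⟨z, -, hz⟩ := hstep j (by omega)
    exact (ih (by omega)).trans (hz ▸ Finset.subset_insert z (c j))

theorem exists_insert_mem_of_path {c : ℕ → Finset α} {l : ℕ} (hmem : ∀ j ≤ l, c j ∈ L)
    (hstep : ∀ j < l, ∃ z : α, z ∉ c j ∧ c (j + 1) = insert z (c j)) (hne : c 0 ≠ c l) :
    ∃ z ∈ c l, z ∉ c 0 ∧ insert z (c 0) ∈ L := by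
  have hl : 0 < l := Nat.pos_of_ne_zero (by rintro rfl; exact hne rfl)
  obtain ⟨z, hz, hc1⟩ := hstep 0 hl
  refine ⟨z, path_subset_of_le hstep hl le_rfl ?_, hz, hc1 ▸ hmem 1 hl⟩
  exact hc1 ▸ Finset.mem_insert_self z (c 0)

theorem exists_insert_mem_of_card_le (hlcm : ∀ f ∈ L, ∀ g ∈ L, f ∪ g ∈ L)
    (hpath : ∀ f ∈ L, ∀ g ∈ L, f ⊆ g →
      ∃ (l : ℕ) (c : ℕ → Finset α), c 0 = f ∧ c l = g ∧ (∀ j ≤ l, c j ∈ L) ∧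
        ∀ j < l, ∃ z : α, z ∉ c j ∧ c (j + 1) = insert z (c j))
    {f g : Finset α} (hf : f ∈ L) (hmin : ∀ g ∈ L, f.card ≤ g.card) (hg : g ∈ L) (hgf : g ≠ f) :
    ∃ z ∈ g, z ∉ f ∧ insert z f ∈ L := by
  have hfg : f ≠ f ∪ g := fun h =>
    hgf (Finset.eq_of_subset_of_card_le (h ▸ Finset.subset_union_right) (hmin g hg))
  obtain ⟨l, c, hc0, hcl, hmem, hstep⟩ :=
    hpath f hf (f ∪ g) (hlcm f hf g hg) Finset.subset_union_left
  obtain ⟨z, hz, hzf, hzL⟩ := exists_insert_mem_of_path hmem hstep (hc0 ▸ hcl ▸ hfg)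
  rw [hc0] at hzf hzL
  rw [hcl] at hz
  exact ⟨z, (Finset.mem_union.1 hz).resolve_left hzf, hzf, hzL⟩

end FullPath

section Squarefree

variable {n : ℕ} {f g : Finset (Fin n)}

theorem sqfMonomial_eq_monomial (g : Finset (Fin n)) :
    sqfMonomial k g = monomial (∑ i ∈ g, Finsupp.single i 1) 1 :=
  (monomial_sum_one g _).symm

theorem sqfMonomial_insert {z : Fin n} (hz : z ∉ g) :
    sqfMonomial k (insert z g) = X z * sqfMonomial k g :=
  Finset.prod_insert hz

theorem sqfMonomial_mem_span_X_image {Z : Set (Fin n)} {z : Fin n} (hzg : z ∈ g) (hzZ : z ∈ Z) :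
    sqfMonomial k g ∈ Ideal.span (X '' Z) :=
  Ideal.mem_of_dvd _ (Finset.dvd_prod_of_mem X hzg) (Ideal.subset_span ⟨z, hzZ, rfl⟩)

theorem span_X_mul_span_sqfMonomial_mul {z : Fin n} (hz : z ∉ f)
    (I : Ideal (MvPolynomial (Fin n) k)) :
    Ideal.span {X z} * (Ideal.span {sqfMonomial k f} * I) =
      Ideal.span {sqfMonomial k (insert z f)} * I := by
  rw [← mul_assoc, Ideal.span_singleton_mul_span_singleton, sqfMonomial_insert hz]

theorem span_sqfMonomial_mul_inf_span_X_image_le {I : Ideal (MvPolynomial (Fin n) k)}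
    (hI : IsMonomialIdeal I) (hsupp : ∀ a ∈ minimalExponents I, ∀ i : Fin n, a i ≠ 0 → i ∈ f)
    {Z : Set (Fin n)} (hZ : ∀ z ∈ Z, z ∉ f) :
    (Ideal.span {sqfMonomial k f} * I) ⊓ Ideal.span (X '' Z) ≤
      Ideal.span (X '' Z) * (Ideal.span {sqfMonomial k f} * I) := by
  refine IsMonomialIdeal.inf_span_X_image_le
    (A := ((∑ i ∈ f, Finsupp.single i 1) + ·) '' minimalExponents I) ?_ ?_
  · rw [sqfMonomial_eq_monomial, ← span_singleton_monomial_mul_span,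
      ← hI.eq_span_minimalExponents]
  · rintro _ ⟨a, ha, rfl⟩ z hz
    have haz : a z = 0 := by_contra fun h => hZ z hz (hsupp a ha z h)
    simp [Finsupp.single_apply, hZ z hz, haz]

end Squarefree

theorem intersection_with_minimal_piece_general {k : Type*} [Field k] {n : ℕ}
    -- `L` is a finite set of non-unit squarefree monomials, identified with their supports.
    (L : Finset (Finset (Fin n)))
    -- `L` is lcm-closed.
    (hlcm : ∀ f ∈ L, ∀ g ∈ L, f ∪ g ∈ L)
    -- a full path exists in `L` between any two elements `f ∣ g` of `L`.
    (hpath : ∀ f ∈ L, ∀ g ∈ L, f ⊆ g →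
      ∃ (l : ℕ) (c : ℕ → Finset (Fin n)), c 0 = f ∧ c l = g ∧ (∀ j ≤ l, c j ∈ L) ∧
        ∀ j < l, ∃ z : Fin n, z ∉ c j ∧ c (j + 1) = insert z (c j))
    -- the assignment of a monomial ideal to each member of `L`.
    (I : Finset (Fin n) → Ideal (MvPolynomial (Fin n) k))
    (hmono : ∀ g ∈ L, IsMonomialIdeal (I g))
    -- (1) every minimal monomial generator of `I g` involves only variables dividing `g`.
    (hsupp : ∀ g ∈ L, ∀ a ∈ minimalExponents (I g), ∀ i : Fin n, a i ≠ 0 → i ∈ g)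
    -- (2) if `g ∈ L` and `z` is a variable with `z·g ∈ L`, then `I g ⊆ 𝔪 · I (z·g)`.
    (hstep : ∀ g ∈ L, ∀ z : Fin n, z ∉ g → insert z g ∈ L →
      I g ≤ Ideal.span (Set.range (X : Fin n → MvPolynomial (Fin n) k)) * I (insert z g))
    -- `f` is an element of `L` of minimal degree, and `H = L \ {f}`.
    (f : Finset (Fin n)) (hf : f ∈ L) (hmin : ∀ g ∈ L, f.card ≤ g.card) :
    (∑ g ∈ L.erase f, Ideal.span {sqfMonomial k g} * I g) ⊓
        (Ideal.span {sqfMonomial k f} * I f) =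
      Ideal.span ((fun z => (X z : MvPolynomial (Fin n) k)) ''
          {z : Fin n | z ∉ f ∧ insert z f ∈ L.erase f}) *
        (Ideal.span {sqfMonomial k f} * I f) := by
  set Z := {z : Fin n | z ∉ f ∧ insert z f ∈ L.erase f}
  have hsum_le : ∑ g ∈ L.erase f, Ideal.span {sqfMonomial k g} * I g ≤ Ideal.span (X '' Z) := by
    rw [Ideal.sum_eq_sup]
    refine Finset.sup_le fun g hg => ?_
    obtain ⟨hgf, hgL⟩ := Finset.mem_erase.1 hg
    obtain ⟨z, hzg, hzf, hzL⟩ := exists_insert_mem_of_card_le hlcm hpath hf hmin hgL hgf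
    have hzZ : z ∈ Z := ⟨hzf, Finset.mem_erase.2 ⟨Finset.insert_ne_self.2 hzf, hzL⟩⟩
    exact Ideal.mul_le_left.trans
      ((Ideal.span_singleton_le_iff_mem _).2 (sqfMonomial_mem_span_X_image hzg hzZ))
  refine le_antisymm ?_ (le_inf ?_ Ideal.mul_le_right)
  · rw [inf_comm]
    exact (inf_le_inf_left _ hsum_le).trans
      (span_sqfMonomial_mul_inf_span_X_image_le (hmono f hf) (hsupp f hf) fun z hz => hz.1)
  · rw [Ideal.span_mul_le_iff]
    rintro _ ⟨z, ⟨hzf, hzH⟩, rfl⟩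
    have hzL := (Finset.mem_erase.1 hzH).2
    calc Ideal.span {X z} * (Ideal.span {sqfMonomial k f} * I f)
        = Ideal.span {sqfMonomial k (insert z f)} * I f := span_X_mul_span_sqfMonomial_mul hzf _
      _ ≤ Ideal.span {sqfMonomial k (insert z f)} * I (insert z f) :=
          Ideal.mul_mono_right ((hstep f hf z hzf hzL).trans Ideal.mul_le_right)
      _ ≤ _ := Finset.single_le_sum (f := fun g => Ideal.span {sqfMonomial k g} * I g)
          (fun _ _ => bot_le) hzH

theorem intersection_with_minimal_piece {k : Type*} [Field k] {n : ℕ}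
    -- `L` is a finite set of non-unit squarefree monomials, identified with their supports.
    (L : Finset (Finset (Fin n)))
    (hne : ∀ g ∈ L, g ≠ ∅)
    -- `L` is lcm-closed.
    (hlcm : ∀ f ∈ L, ∀ g ∈ L, f ∪ g ∈ L)
    -- a full path exists in `L` between any two elements `f ∣ g` of `L`.
    (hpath : ∀ f ∈ L, ∀ g ∈ L, f ⊆ g →
      ∃ (l : ℕ) (c : ℕ → Finset (Fin n)), c 0 = f ∧ c l = g ∧ (∀ j ≤ l, c j ∈ L) ∧
        ∀ j < l, ∃ z : Fin n, z ∉ c j ∧ c (j + 1) = insert z (c j))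
    -- the assignment of a monomial ideal to each member of `L`.
    (I : Finset (Fin n) → Ideal (MvPolynomial (Fin n) k))
    (hmono : ∀ g ∈ L, IsMonomialIdeal (I g))
    -- (1) every minimal monomial generator of `I g` involves only variables dividing `g`.
    (hsupp : ∀ g ∈ L, ∀ a ∈ minimalExponents (I g), ∀ i : Fin n, a i ≠ 0 → i ∈ g)
    -- (2) if `g ∈ L` and `z` is a variable with `z·g ∈ L`, then `I g ⊆ 𝔪 · I (z·g)`.
    (hstep : ∀ g ∈ L, ∀ z : Fin n, z ∉ g → insert z g ∈ L →
      I g ≤ Ideal.span (Set.range (X : Fin n → MvPolynomial (Fin n) k)) * I (insert z g))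
    -- `f` is an element of `L` of minimal degree, and `H = L \ {f}`.
    (f : Finset (Fin n)) (hf : f ∈ L) (hmin : ∀ g ∈ L, f.card ≤ g.card) :
    (∑ g ∈ L.erase f, Ideal.span {sqfMonomial k g} * I g) ⊓
        (Ideal.span {sqfMonomial k f} * I f) =
      Ideal.span ((fun z => (X z : MvPolynomial (Fin n) k)) ''
          {z : Fin n | z ∉ f ∧ insert z f ∈ L.erase f}) *
        (Ideal.span {sqfMonomial k f} * I f) :=
  intersection_with_minimal_piece_general L hlcm hpath I hmono hsupp hstep f hf hmin

end
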